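/- Let K > r be positive integers. Let H ∈ ℝ^{K×K} be symmetric, let V ∈ ℝ^{K×r} and W ∈ ℝ^{K×r} have orthonormal columns, let D = diag(d₁,…,d_r) with d₁,…,d_r > 0, let ε ∈ ℝ^{r×r}, and suppose H V = V D + W ε. Let V_ε ∈ ℝ^{K×r} have orthonormal columns each of which is an eigenvector of H, and suppose that for every j ∈ {1,…,r} and every k ∈ {1,…,K}, d_j ≠ Λ_k(P_{V_ε}^⊥ H P_{V_ε}^⊥). Then ‖P_{V_ε} − P_V P_{V_ε}‖_F ≤ ( Σ_{j=1}^r ‖ε_{·j}‖₂² / min_{k∈{1,…,K}} ( d_j − Λ_k(P_{V_ε}^⊥ H P_{V_ε}^⊥) )² )^{1/2}, where ε_{·j} denotes the j-th column of ε. -/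

import Mathlib

open Matrix BigOperators

/-- The `k`-th largest eigenvalue (0-indexed: `k = 0` is the largest) of a
Hermitian real matrix, counted with multiplicity. -/
noncomputable def eigsDesc {n : ℕ} {A : Matrix (Fin n) (Fin n) ℝ} (hA : A.IsHermitian)
    (k : Fin n) : ℝ :=
  (hA.eigenvalues ∘ Tuple.sort hA.eigenvalues) k.rev

/-- Frobenius norm of a real matrix. -/
noncomputable def frob {a b : ℕ} (A : Matrix (Fin a) (Fin b) ℝ) : ℝ :=
  Real.sqrt (∑ i, ∑ j, A i j ^ 2)

/-! Write `P = V_ε V_εᵀ`, `P^⊥ = 1 - P` and `B = P^⊥ H P^⊥`. Since the columns of `V_ε` are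
eigenvectors of `H`, `P^⊥ H P = 0`, so for each column `v_j` of `V` the vector `x = P^⊥ v_j`
satisfies `(B - d_j) x = P^⊥ W ε_j`. Expanding `x` in an orthonormal eigenbasis of `B` gives
`min_k (d_j - Λ_k)² ‖x‖² ≤ ‖P^⊥ W ε_j‖² ≤ ‖ε_j‖²`. Summing over `j` bounds `‖P^⊥ V‖_F²`, which
equals `‖P - P_V P‖_F²`. -/

variable {m n p R : Type*} [Fintype m] [Fintype n] [Fintype p]

section CommRing

variable [CommRing R]

theorem sum_sum_sq_eq_trace (A : Matrix m n R) : ∑ i, ∑ j, A i j ^ 2 = trace (Aᵀ * A) := by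
  rw [Finset.sum_comm]
  simp [trace, mul_apply, sq]

theorem sum_sum_sq_eq_sum_col_dotProduct (A : Matrix m n R) :
    ∑ i, ∑ j, A i j ^ 2 = ∑ j, A.col j ⬝ᵥ A.col j := by
  rw [Finset.sum_comm]
  simp [dotProduct, sq]

theorem mulVec_dotProduct_mulVec_self (A : Matrix m n R) (x : n → R) :
    (A *ᵥ x) ⬝ᵥ (A *ᵥ x) = (Aᵀ * A) *ᵥ x ⬝ᵥ x := by
  rw [dotProduct_mulVec, ← mulVec_transpose, mulVec_mulVec]

theorem col_mul {l : Type*} [DecidableEq p] (A : Matrix l n R) (B : Matrix n p R) (j : p) :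
    (A * B).col j = A *ᵥ B.col j := by
  rw [← mulVec_single_one, ← mulVec_mulVec, mulVec_single_one]

theorem col_mul_diagonal {l : Type*} [DecidableEq n] (A : Matrix l n R) (d : n → R) (j : n) :
    (A * diagonal d).col j = d j • A.col j := by
  ext i
  simp [mul_diagonal, mul_comm]

theorem mul_eq_mul_diagonal_of_mulVec_col [DecidableEq n] {A : Matrix m m R} {U : Matrix m n R}
    {μ : n → R} (h : ∀ j, A *ᵥ U.col j = μ j • U.col j) : A * U = U * diagonal μ :=
  ext_col fun j => by rw [col_mul, h, col_mul_diagonal]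

theorem transpose_mul_transpose_self {l : Type*} (V : Matrix l n R) : (V * Vᵀ)ᵀ = V * Vᵀ := by
  rw [transpose_mul, transpose_transpose]

theorem transpose_one_sub_mul_transpose_self {l : Type*} [DecidableEq l] (V : Matrix l n R) :
    (1 - V * Vᵀ)ᵀ = 1 - V * Vᵀ := by
  rw [transpose_sub, transpose_one, transpose_mul_transpose_self]

theorem trace_transpose_mul_self_of_symm_idempotent {S : Matrix m m R} (hSt : Sᵀ = S)
    (hS : IsIdempotentElem S) (X : Matrix m n R) :
    trace ((S * X)ᵀ * (S * X)) = trace (S * (X * Xᵀ)) := by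
  rw [transpose_mul, hSt, Matrix.mul_assoc, ← Matrix.mul_assoc S S X, hS.eq, trace_mul_comm,
    Matrix.mul_assoc]

section Orthonormal

variable [DecidableEq n] {V : Matrix m n R}

theorem isIdempotentElem_mul_transpose (hV : Vᵀ * V = 1) : IsIdempotentElem (V * Vᵀ) := by
  change V * Vᵀ * (V * Vᵀ) = V * Vᵀ
  rw [Matrix.mul_assoc, ← Matrix.mul_assoc Vᵀ, hV, Matrix.one_mul]

theorem one_sub_mul_transpose_mul [DecidableEq m] (hV : Vᵀ * V = 1) : (1 - V * Vᵀ) * V = 0 := by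
  rw [Matrix.sub_mul, Matrix.one_mul, Matrix.mul_assoc, hV, Matrix.mul_one, sub_self]

theorem trace_mul_transpose (hV : Vᵀ * V = 1) : trace (V * Vᵀ) = Fintype.card n := by
  rw [trace_mul_comm, hV, trace_one]

theorem mulVec_dotProduct_mulVec_of_transpose_mul_self (hV : Vᵀ * V = 1) (x : n → R) :
    (V *ᵥ x) ⬝ᵥ (V *ᵥ x) = x ⬝ᵥ x := by
  rw [mulVec_dotProduct_mulVec_self, hV, one_mulVec]

theorem one_sub_mul_mul_one_sub_mul_one_sub [DecidableEq m] (hV : Vᵀ * V = 1) {H : Matrix m m R}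
    {D : Matrix n n R} (hHV : H * V = V * D) :
    (1 - V * Vᵀ) * H * (1 - V * Vᵀ) * (1 - V * Vᵀ) = (1 - V * Vᵀ) * H := by
  have hHP : (1 - V * Vᵀ) * H * (V * Vᵀ) = 0 := by
    rw [← Matrix.mul_assoc, Matrix.mul_assoc _ H V, hHV, ← Matrix.mul_assoc,
      one_sub_mul_transpose_mul hV, Matrix.zero_mul, Matrix.zero_mul]
  rw [mul_assoc _ (1 - V * Vᵀ), (isIdempotentElem_mul_transpose hV).one_sub.eq, mul_sub, mul_one,
    hHP, sub_zero]

/-- Both sides equal `r - tr(P_U P_V)`, `r` being the common number of columns. -/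
theorem sum_sum_sq_mul_transpose_sub_mul [DecidableEq m] {U : Matrix m n R} (hU : Uᵀ * U = 1)
    (hV : Vᵀ * V = 1) :
    ∑ i, ∑ j, (U * Uᵀ - V * Vᵀ * (U * Uᵀ)) i j ^ 2 =
      ∑ i, ∑ j, ((1 - U * Uᵀ) * V : Matrix m n R) i j ^ 2 := by
  have hUU : U * Uᵀ * (U * Uᵀ)ᵀ = U * Uᵀ := by
    rw [transpose_mul_transpose_self, (isIdempotentElem_mul_transpose hU).eq]
  rw [sum_sum_sq_eq_trace, sum_sum_sq_eq_trace, ← one_sub_mul,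
    trace_transpose_mul_self_of_symm_idempotent (transpose_one_sub_mul_transpose_self V)
      (isIdempotentElem_mul_transpose hV).one_sub,
    trace_transpose_mul_self_of_symm_idempotent (transpose_one_sub_mul_transpose_self U)
      (isIdempotentElem_mul_transpose hU).one_sub,
    hUU, Matrix.sub_mul, Matrix.sub_mul, Matrix.one_mul, Matrix.one_mul, trace_sub, trace_sub,
    trace_mul_transpose hU, trace_mul_transpose hV, trace_mul_comm]

end Orthonormal

end CommRing

theorem dotProduct_self_nonneg (x : n → ℝ) : 0 ≤ x ⬝ᵥ x :=
  Finset.sum_nonneg fun i _ => mul_self_nonneg (x i)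

theorem one_sub_mulVec_dotProduct_le [DecidableEq m] [DecidableEq n] {V : Matrix m n ℝ}
    (hV : Vᵀ * V = 1) (z : m → ℝ) :
    ((1 - V * Vᵀ) *ᵥ z) ⬝ᵥ ((1 - V * Vᵀ) *ᵥ z) ≤ z ⬝ᵥ z := by
  have hproj : (V * Vᵀ) *ᵥ z ⬝ᵥ z = (Vᵀ *ᵥ z) ⬝ᵥ (Vᵀ *ᵥ z) := by
    rw [mulVec_dotProduct_mulVec_self, transpose_transpose]
  rw [mulVec_dotProduct_mulVec_self, transpose_one_sub_mul_transpose_self,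
    (isIdempotentElem_mul_transpose hV).one_sub.eq, sub_mulVec, one_mulVec, sub_dotProduct,
    hproj, sub_le_self_iff]
  exact dotProduct_self_nonneg _

theorem OrthonormalBasis.sum_sq_dotProduct (b : OrthonormalBasis n ℝ (EuclideanSpace ℝ n))
    (x : n → ℝ) : ∑ k, (⇑(b k) ⬝ᵥ x) ^ 2 = x ⬝ᵥ x := by
  have h := b.sum_sq_inner_right (WithLp.toLp 2 x)
  rw [← real_inner_self_eq_norm_sq] at h
  simp only [EuclideanSpace.inner_eq_star_dotProduct, star_trivial] at h
  simpa [dotProduct_comm] using h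

namespace Matrix.IsHermitian

variable [DecidableEq n] {B : Matrix n n ℝ}

theorem eigenvectorBasis_dotProduct_mulVec (hB : B.IsHermitian) (k : n) (x : n → ℝ) :
    ⇑(hB.eigenvectorBasis k) ⬝ᵥ (B *ᵥ x) =
      hB.eigenvalues k * (⇑(hB.eigenvectorBasis k) ⬝ᵥ x) := by
  have hBt : Bᵀ = B := by rw [← conjTranspose_eq_transpose_of_trivial, hB.eq]
  rw [dotProduct_mulVec, ← mulVec_transpose, hBt, hB.mulVec_eigenvectorBasis, smul_dotProduct,
    smul_eq_mul]

theorem iInf_sq_sub_eigenvalues_mul_le (hB : B.IsHermitian) (c : ℝ) (x : n → ℝ) :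
    (⨅ k, (c - hB.eigenvalues k) ^ 2) * (x ⬝ᵥ x)
      ≤ (B *ᵥ x - c • x) ⬝ᵥ (B *ᵥ x - c • x) := by
  set b := hB.eigenvectorBasis
  have hcoord (k : n) :
      ⇑(b k) ⬝ᵥ (B *ᵥ x - c • x) = (hB.eigenvalues k - c) * (⇑(b k) ⬝ᵥ x) := by
    rw [dotProduct_sub, eigenvectorBasis_dotProduct_mulVec, dotProduct_smul, smul_eq_mul]; ring
  rw [← b.sum_sq_dotProduct x, ← b.sum_sq_dotProduct, Finset.mul_sum]
  refine Finset.sum_le_sum fun k _ => ?_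
  rw [hcoord, mul_pow, ← neg_sub, neg_sq]
  exact mul_le_mul_of_nonneg_right (ciInf_le (Finite.bddBelow_range _) k) (sq_nonneg _)

/-- For `n` empty the infimum is the junk value `0`, but then so is `x ⬝ᵥ x`. -/
theorem dotProduct_self_le_div_iInf (hB : B.IsHermitian) {c : ℝ}
    (hc : ∀ k, c ≠ hB.eigenvalues k) (x : n → ℝ) :
    x ⬝ᵥ x ≤ (B *ᵥ x - c • x) ⬝ᵥ (B *ᵥ x - c • x) / ⨅ k, (c - hB.eigenvalues k) ^ 2 := by
  cases isEmpty_or_nonempty n with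
  | inl _ =>
    rw [dotProduct, Finset.univ_eq_empty, Finset.sum_empty]
    exact div_nonneg (dotProduct_self_nonneg _) (Real.iInf_nonneg fun _ => sq_nonneg _)
  | inr _ =>
    obtain ⟨k, hk⟩ := exists_eq_ciInf_of_finite (f := fun k => (c - hB.eigenvalues k) ^ 2)
    have hgap : 0 < ⨅ k, (c - hB.eigenvalues k) ^ 2 :=
      hk ▸ sq_pos_of_ne_zero (sub_ne_zero.2 (hc k))
    rw [le_div_iff₀ hgap, mul_comm]
    exact hB.iInf_sq_sub_eigenvalues_mul_le c x

end Matrix.IsHermitian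

theorem davisKahan_column_bound [DecidableEq m] [DecidableEq n] [DecidableEq p] {H : Matrix m m ℝ}
    {U : Matrix m n ℝ} (hU : Uᵀ * U = 1) {D : Matrix n n ℝ} (hHU : H * U = U * D)
    (hB : ((1 - U * Uᵀ) * H * (1 - U * Uᵀ)).IsHermitian) {W : Matrix m p ℝ} (hW : Wᵀ * W = 1)
    {c : ℝ} (hc : ∀ k, c ≠ hB.eigenvalues k) {v : m → ℝ} {e : p → ℝ}
    (hv : H *ᵥ v = c • v + W *ᵥ e) :
    ((1 - U * Uᵀ) *ᵥ v) ⬝ᵥ ((1 - U * Uᵀ) *ᵥ v) ≤ e ⬝ᵥ e / ⨅ k, (c - hB.eigenvalues k) ^ 2 := by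
  have hres : ((1 - U * Uᵀ) * H * (1 - U * Uᵀ)) *ᵥ ((1 - U * Uᵀ) *ᵥ v) - c • ((1 - U * Uᵀ) *ᵥ v) =
      (1 - U * Uᵀ) *ᵥ (W *ᵥ e) := by
    rw [mulVec_mulVec, one_sub_mul_mul_one_sub_mul_one_sub hU hHU, ← mulVec_mulVec, hv,
      mulVec_add, mulVec_smul, add_sub_cancel_left]
  calc _ ≤ _ := hB.dotProduct_self_le_div_iInf hc _
    _ ≤ e ⬝ᵥ e / ⨅ k, (c - hB.eigenvalues k) ^ 2 := by
      rw [hres]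
      gcongr
      · exact Real.iInf_nonneg fun _ => sq_nonneg _
      · exact (one_sub_mulVec_dotProduct_le hU _).trans
          (mulVec_dotProduct_mulVec_of_transpose_mul_self hW e).le

theorem exists_perm_eigsDesc_eq {n : ℕ} {A : Matrix (Fin n) (Fin n) ℝ} (hA : A.IsHermitian) :
    ∃ σ : Equiv.Perm (Fin n), eigsDesc hA = hA.eigenvalues ∘ σ :=
  ⟨Fin.revPerm.trans (Tuple.sort hA.eigenvalues), rfl⟩

theorem stmt4 (K r : ℕ)
    (H : Matrix (Fin K) (Fin K) ℝ)
    (V W : Matrix (Fin K) (Fin r) ℝ) (hV : Vᵀ * V = 1) (hW : Wᵀ * W = 1)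
    (d : Fin r → ℝ)
    (ε : Matrix (Fin r) (Fin r) ℝ)
    (hHV : H * V = V * Matrix.diagonal d + W * ε)
    (Vε : Matrix (Fin K) (Fin r) ℝ) (hVε : Vεᵀ * Vε = 1)
    (hVεeig : ∀ j : Fin r, ∃ μ : ℝ,
      H.mulVec (fun i => Vε i j) = μ • (fun i => Vε i j))
    (hPHP : ((1 - Vε * Vεᵀ) * H * (1 - Vε * Vεᵀ)).IsHermitian)
    (hgap : ∀ (j : Fin r) (k : Fin K), d j ≠ eigsDesc hPHP k) :
    frob (Vε * Vεᵀ - (V * Vᵀ) * (Vε * Vεᵀ))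
      ≤ Real.sqrt (∑ j : Fin r,
          (∑ i : Fin r, ε i j ^ 2) / ⨅ k : Fin K, (d j - eigsDesc hPHP k) ^ 2) := by
  choose μ hμ using hVεeig
  have hHVε : H * Vε = Vε * diagonal μ := mul_eq_mul_diagonal_of_mulVec_col hμ
  obtain ⟨σ, hσ⟩ := exists_perm_eigsDesc_eq hPHP
  rw [frob, sum_sum_sq_mul_transpose_sub_mul hVε hV, sum_sum_sq_eq_sum_col_dotProduct]
  refine Real.sqrt_le_sqrt (Finset.sum_le_sum fun j _ => ?_)
  have hcol : H *ᵥ V.col j = d j • V.col j + W *ᵥ ε.col j := by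
    rw [← col_mul, hHV]
    exact congrArg₂ (· + ·) (col_mul_diagonal V d j) (col_mul W ε j)
  have hgap' (k : Fin K) : d j ≠ hPHP.eigenvalues k := by
    simpa [hσ] using hgap j (σ.symm k)
  have hinf : ⨅ k, (d j - eigsDesc hPHP k) ^ 2 = ⨅ k, (d j - hPHP.eigenvalues k) ^ 2 :=
    hσ ▸ σ.iInf_comp (g := fun k => (d j - hPHP.eigenvalues k) ^ 2)
  rw [hinf, col_mul]
  simpa [dotProduct, sq] using davisKahan_column_bound hVε hHVε hPHP hW hgap' hcol
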